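/- arXiv:1511.01343 — 2 statements merged into one kernel-verified Lean document; each statement's English description precedes it below -/
import Mathlib

section
/- Cramer's V formula: consider two variables j and j' of the same block of the one-factor binary model, with β_j ≤ β_{j'} and β_j, β_{j'} ∈ (0,1). Let p_{hh'} := ∫₀¹ p_j(u)^h(1−p_j(u))^{1−h} · p_{j'}(u)^{h'}(1−p_{j'}(u))^{1−h'} du for h, h' ∈ {0,1}, let p_{h·} and p_{·h'} denote the corresponding marginal probabilities, and let V := sqrt( Σ_{h=0}^1 Σ_{h'=0}^1 (p_{hh'} − p_{h·}p_{·h'})² / (p_{h·}p_{·h'}) ). Then V = ε_j ε_{j'} · sqrt( β_j(1−β_{j'}) / ( β_{j'}(1−β_j) ) ). -/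
open MeasureTheory

/-! The conditional probability `p_j(u)` is a step function of the latent `u` with mean `α_j`
and jump `±ε_j` at `β_j`, so the two-variable table is an explicit polynomial in the
parameters. For any 2×2 probability table every cell deviates from the product of its
marginals by `± (p₀₀ p₁₁ - p₀₁ p₁₀)`, hence `V² = (p₀₀ p₁₁ - p₀₁ p₁₀)² / (p₀· p₁· p·₀ p·₁)`.
Here the determinant is `β_j (1 - β_{j'}) (λ_j - ν_j) (λ_{j'} - ν_{j'})` and each row product
is `α_j (1 - α_j) = β_j (1 - β_j)`. -/

lemma intervalIntegrable_ite_lt_zero (β K a b : ℝ) :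
    IntervalIntegrable (fun u : ℝ => if u < β then K else 0) volume a b := by
  rw [intervalIntegrable_iff]
  exact (integrableOn_const (s := Set.uIoc a b) (μ := volume) (C := K) (by simp)).indicator
    measurableSet_Iio

lemma integral_ite_lt_zero {β : ℝ} (K : ℝ) (h0 : 0 ≤ β) (h1 : β ≤ 1) :
    ∫ u in (0:ℝ)..1, (if u < β then K else 0) = β * K := by
  have hIoo : Set.Iio β ∩ Set.Ioc 0 1 = Set.Ioo 0 β := by
    ext x
    simp only [Set.mem_inter_iff, Set.mem_Iio, Set.mem_Ioc, Set.mem_Ioo]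
    exact ⟨fun ⟨hx, hx0, _⟩ => ⟨hx0, hx⟩, fun ⟨hx0, hx⟩ => ⟨hx, hx0, hx.le.trans h1⟩⟩
  change ∫ u in (0:ℝ)..1, Set.indicator (Set.Iio β) (fun _ => K) u = β * K
  rw [intervalIntegral.integral_of_le zero_le_one, integral_indicator measurableSet_Iio,
    Measure.restrict_restrict measurableSet_Iio, setIntegral_const, hIoo, measureReal_def,
    Real.volume_Ioo, sub_zero, ENNReal.toReal_ofReal h0, smul_eq_mul]

lemma integral_ite_lt_mul_ite_lt {β₁ β₂ : ℝ} (A B C D : ℝ)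
    (h0 : 0 ≤ β₁) (h12 : β₁ ≤ β₂) (h2 : β₂ ≤ 1) :
    ∫ u in (0:ℝ)..1, (if u < β₁ then A else B) * (if u < β₂ then C else D)
      = β₁ * (A * C) + (β₂ - β₁) * (B * C) + (1 - β₂) * (B * D) := by
  have hsplit : ∀ u : ℝ, (if u < β₁ then A else B) * (if u < β₂ then C else D)
      = B * D + ((if u < β₂ then B * C - B * D else 0)
        + (if u < β₁ then A * C - B * C else 0)) := by
    intro u
    by_cases hu1 : u < β₁
    · simp [hu1, hu1.trans_le h12]
    · by_cases hu2 : u < β₂ <;> simp [hu1, hu2]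
  simp_rw [hsplit]
  rw [intervalIntegral.integral_add intervalIntegrable_const
      ((intervalIntegrable_ite_lt_zero _ _ _ _).add (intervalIntegrable_ite_lt_zero _ _ _ _)),
    intervalIntegral.integral_add (intervalIntegrable_ite_lt_zero _ _ _ _)
      (intervalIntegrable_ite_lt_zero _ _ _ _),
    intervalIntegral.integral_const, integral_ite_lt_zero _ (h0.trans h12) h2,
    integral_ite_lt_zero _ h0 (h12.trans h2)]
  simp only [sub_zero, smul_eq_mul, one_mul]
  ring

def bernoulliMass (q : ℝ) (h : ℕ) : ℝ := q ^ h * (1 - q) ^ (1 - h)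

/-- The joint law of two Bernoulli variables whose parameters are `A, C` on `u < β₁`,
`B, C` on `β₁ ≤ u < β₂` and `B, D` on `β₂ ≤ u`, for `u` uniform on `[0, 1]`. -/
def stepTable (β₁ β₂ A B C D : ℝ) (h h' : ℕ) : ℝ :=
  β₁ * (bernoulliMass A h * bernoulliMass C h')
    + (β₂ - β₁) * (bernoulliMass B h * bernoulliMass C h')
    + (1 - β₂) * (bernoulliMass B h * bernoulliMass D h')

lemma integral_bernoulliMass_mul_bernoulliMass {β₁ β₂ : ℝ} (A B C D : ℝ)
    (h0 : 0 ≤ β₁) (h12 : β₁ ≤ β₂) (h2 : β₂ ≤ 1) (h h' : ℕ) :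
    ∫ u in (0:ℝ)..1, bernoulliMass (if u < β₁ then A else B) h *
        bernoulliMass (if u < β₂ then C else D) h'
      = stepTable β₁ β₂ A B C D h h' := by
  simp only [apply_ite (bernoulliMass · h), apply_ite (bernoulliMass · h')]
  exact integral_ite_lt_mul_ite_lt _ _ _ _ h0 h12 h2

section stepTable

variable (β₁ β₂ A B C D : ℝ)

lemma stepTable_total :
    stepTable β₁ β₂ A B C D 0 0 + stepTable β₁ β₂ A B C D 0 1 + stepTable β₁ β₂ A B C D 1 0
      + stepTable β₁ β₂ A B C D 1 1 = 1 := by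
  simp only [stepTable, bernoulliMass]
  ring

lemma stepTable_det :
    stepTable β₁ β₂ A B C D 0 0 * stepTable β₁ β₂ A B C D 1 1
      - stepTable β₁ β₂ A B C D 0 1 * stepTable β₁ β₂ A B C D 1 0
      = β₁ * (1 - β₂) * ((A - B) * (C - D)) := by
  simp only [stepTable, bernoulliMass]
  ring

lemma stepTable_row_sum_mul :
    (stepTable β₁ β₂ A B C D 0 0 + stepTable β₁ β₂ A B C D 0 1)
      * (stepTable β₁ β₂ A B C D 1 0 + stepTable β₁ β₂ A B C D 1 1)
      = (1 - (β₁ * A + (1 - β₁) * B)) * (β₁ * A + (1 - β₁) * B) := by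
  simp only [stepTable, bernoulliMass]
  ring

lemma stepTable_col_sum_mul :
    (stepTable β₁ β₂ A B C D 0 0 + stepTable β₁ β₂ A B C D 1 0)
      * (stepTable β₁ β₂ A B C D 0 1 + stepTable β₁ β₂ A B C D 1 1)
      = (1 - (β₂ * C + (1 - β₂) * D)) * (β₂ * C + (1 - β₂) * D) := by
  simp only [stepTable, bernoulliMass]
  ring

end stepTable

lemma sum_range_two_sq_sub_mul_div_mul (p : ℕ → ℕ → ℝ) (pr pc : ℕ → ℝ)
    (hpr : ∀ h, pr h = p h 0 + p h 1) (hpc : ∀ h', pc h' = p 0 h' + p 1 h')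
    (htotal : p 0 0 + p 0 1 + p 1 0 + p 1 1 = 1)
    (hr : pr 0 * pr 1 ≠ 0) (hc : pc 0 * pc 1 ≠ 0) :
    ∑ h ∈ Finset.range 2, ∑ h' ∈ Finset.range 2, (p h h' - pr h * pc h') ^ 2 / (pr h * pc h')
      = (p 0 0 * p 1 1 - p 0 1 * p 1 0) ^ 2 / (pr 0 * pr 1 * (pc 0 * pc 1)) := by
  have hdev : ∀ h < 2, ∀ h' < 2,
      (p h h' - pr h * pc h') ^ 2 = (p 0 0 * p 1 1 - p 0 1 * p 1 0) ^ 2 := by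
    intro h hh h' hh'
    have h11 : p 1 1 = 1 - p 0 0 - p 0 1 - p 1 0 := by linarith
    interval_cases h <;> interval_cases h' <;> simp only [hpr, hpc, h11] <;> ring
  have hsum_inv : ∑ h ∈ Finset.range 2, ∑ h' ∈ Finset.range 2, 1 / (pr h * pc h')
      = 1 / (pr 0 * pr 1 * (pc 0 * pc 1)) := by
    have hrow : pr 0 + pr 1 = 1 := by rw [hpr, hpr]; linarith
    have hcol : pc 0 + pc 1 = 1 := by rw [hpc, hpc]; linarith
    obtain ⟨hr0, hr1⟩ := mul_ne_zero_iff.1 hr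
    obtain ⟨hc0, hc1⟩ := mul_ne_zero_iff.1 hc
    simp only [Finset.sum_range_succ, Finset.sum_range_zero, zero_add]
    field_simp
    linear_combination (pc 0 + pc 1) * hrow + hcol
  rw [← mul_one_div _ (pr 0 * pr 1 * _), ← hsum_inv, Finset.mul_sum]
  refine Finset.sum_congr rfl fun h hh => ?_
  rw [Finset.mul_sum]
  refine Finset.sum_congr rfl fun h' hh' => ?_
  rw [hdev h (Finset.mem_range.1 hh) h' (Finset.mem_range.1 hh'), mul_one_div]

section oneFactorVariable

variable {α ε δ β lam ν : ℝ}

lemma mul_one_sub_eq_of_ite (hβ : β = if δ = 1 then α else 1 - α) :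
    β * (1 - β) = α * (1 - α) := by
  split_ifs at hβ <;> subst hβ <;> ring

lemma step_mean_eq (hδ : δ = 0 ∨ δ = 1) (hβ : β = if δ = 1 then α else 1 - α)
    (hlam : lam = (1 - ε) * α + ε * δ) (hν : ν = (1 - ε) * α + ε * (1 - δ)) :
    β * lam + (1 - β) * ν = α := by
  rcases hδ with rfl | rfl <;> simp only [hβ, hlam, hν] <;> norm_num <;> ring

lemma sq_step_jump (hδ : δ = 0 ∨ δ = 1)
    (hlam : lam = (1 - ε) * α + ε * δ) (hν : ν = (1 - ε) * α + ε * (1 - δ)) :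
    (lam - ν) ^ 2 = ε ^ 2 := by
  rcases hδ with rfl | rfl <;> rw [hlam, hν] <;> ring

end oneFactorVariable

theorem cramers_V_formula_general
    (α1 ε1 δ1 α2 ε2 δ2 β1 β2 lam1 ν1 lam2 ν2 : ℝ)
    (hε1 : ε1 ∈ Set.Ioo (0:ℝ) 1) (hε2 : ε2 ∈ Set.Ioo (0:ℝ) 1)
    (hδ1 : δ1 = 0 ∨ δ1 = 1) (hδ2 : δ2 = 0 ∨ δ2 = 1)
    (hβ1 : β1 = if δ1 = 1 then α1 else 1 - α1)
    (hβ2 : β2 = if δ2 = 1 then α2 else 1 - α2)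
    (hlam1 : lam1 = (1 - ε1) * α1 + ε1 * δ1) (hν1 : ν1 = (1 - ε1) * α1 + ε1 * (1 - δ1))
    (hlam2 : lam2 = (1 - ε2) * α2 + ε2 * δ2) (hν2 : ν2 = (1 - ε2) * α2 + ε2 * (1 - δ2))
    (hβ1m : β1 ∈ Set.Ioo (0:ℝ) 1) (hβ2m : β2 ∈ Set.Ioo (0:ℝ) 1) (hord : β1 ≤ β2)
    (p : ℕ → ℕ → ℝ)
    (hp : ∀ h h', p h h' = ∫ u in (0:ℝ)..1,
      ((if u < β1 then lam1 else ν1) ^ h *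
        (1 - (if u < β1 then lam1 else ν1)) ^ (1 - h)) *
      ((if u < β2 then lam2 else ν2) ^ h' *
        (1 - (if u < β2 then lam2 else ν2)) ^ (1 - h')))
    (pr pc : ℕ → ℝ)
    (hpr : ∀ h, pr h = p h 0 + p h 1)
    (hpc : ∀ h', pc h' = p 0 h' + p 1 h')
    (V : ℝ)
    (hV : V = Real.sqrt (∑ h ∈ Finset.range 2, ∑ h' ∈ Finset.range 2,
      (p h h' - pr h * pc h') ^ 2 / (pr h * pc h'))) :
    V = ε1 * ε2 * Real.sqrt (β1 * (1 - β2) / (β2 * (1 - β1))) := by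
  obtain ⟨hβ1p, hβ1l⟩ := hβ1m
  obtain ⟨hβ2p, hβ2l⟩ := hβ2m
  have hcell : ∀ h h', p h h' = stepTable β1 β2 lam1 ν1 lam2 ν2 h h' := fun h h' =>
    (hp h h').trans
      (integral_bernoulliMass_mul_bernoulliMass _ _ _ _ hβ1p.le hord hβ2l.le h h')
  have hrow_prod : pr 0 * pr 1 = β1 * (1 - β1) := by
    simp only [hpr, hcell]
    rw [stepTable_row_sum_mul, step_mean_eq hδ1 hβ1 hlam1 hν1,
      mul_one_sub_eq_of_ite hβ1, mul_comm]
  have hcol_prod : pc 0 * pc 1 = β2 * (1 - β2) := by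
    simp only [hpc, hcell]
    rw [stepTable_col_sum_mul, step_mean_eq hδ2 hβ2 hlam2 hν2,
      mul_one_sub_eq_of_ite hβ2, mul_comm]
  have hr : pr 0 * pr 1 ≠ 0 := by rw [hrow_prod]; exact mul_ne_zero hβ1p.ne' (by linarith)
  have hc : pc 0 * pc 1 ≠ 0 := by rw [hcol_prod]; exact mul_ne_zero hβ2p.ne' (by linarith)
  have hchi : ∑ h ∈ Finset.range 2, ∑ h' ∈ Finset.range 2,
      (p h h' - pr h * pc h') ^ 2 / (pr h * pc h')
      = (ε1 * ε2) ^ 2 * (β1 * (1 - β2) / (β2 * (1 - β1))) := by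
    rw [sum_range_two_sq_sub_mul_div_mul p pr pc hpr hpc
        (by simp only [hcell]; exact stepTable_total ..) hr hc,
      hrow_prod, hcol_prod]
    simp only [hcell, stepTable_det]
    rw [mul_pow (β1 * (1 - β2)), mul_pow (lam1 - ν1), sq_step_jump hδ1 hlam1 hν1,
      sq_step_jump hδ2 hlam2 hν2]
    have hβ1c : 1 - β1 ≠ 0 := by linarith
    field_simp
  rw [hV, hchi, Real.sqrt_mul (sq_nonneg _), Real.sqrt_sq (mul_nonneg hε1.1.le hε2.1.le)]

/-- **Cramer's V formula (Proposition 3).**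
For two variables of the same block of the one-factor binary model, with parameters
`(α₁,ε₁,δ₁)` and `(α₂,ε₂,δ₂)`, `β₁ ≤ β₂`, `β₁, β₂ ∈ (0,1)`, joint probabilities
`p h h' = ∫₀¹ p₁(u)^h (1-p₁(u))^(1-h) p₂(u)^{h'} (1-p₂(u))^(1-h') du`, marginals
`pr h = p h 0 + p h 1`, `pc h' = p 0 h' + p 1 h'`, Cramer's V
`V = sqrt(∑_{h,h'∈{0,1}} (p h h' - pr h ⬝ pc h')² / (pr h ⬝ pc h'))` satisfies
`V = ε₁ ε₂ sqrt( β₁(1-β₂) / (β₂(1-β₁)) )`. -/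
theorem cramers_V_formula
    (α1 ε1 δ1 α2 ε2 δ2 β1 β2 lam1 ν1 lam2 ν2 : ℝ)
    (hα1 : α1 ∈ Set.Ioo (0:ℝ) 1) (hα2 : α2 ∈ Set.Ioo (0:ℝ) 1)
    (hε1 : ε1 ∈ Set.Ioo (0:ℝ) 1) (hε2 : ε2 ∈ Set.Ioo (0:ℝ) 1)
    (hδ1 : δ1 = 0 ∨ δ1 = 1) (hδ2 : δ2 = 0 ∨ δ2 = 1)
    (hβ1 : β1 = if δ1 = 1 then α1 else 1 - α1)
    (hβ2 : β2 = if δ2 = 1 then α2 else 1 - α2)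
    (hlam1 : lam1 = (1 - ε1) * α1 + ε1 * δ1) (hν1 : ν1 = (1 - ε1) * α1 + ε1 * (1 - δ1))
    (hlam2 : lam2 = (1 - ε2) * α2 + ε2 * δ2) (hν2 : ν2 = (1 - ε2) * α2 + ε2 * (1 - δ2))
    (hβ1m : β1 ∈ Set.Ioo (0:ℝ) 1) (hβ2m : β2 ∈ Set.Ioo (0:ℝ) 1) (hord : β1 ≤ β2)
    (p : ℕ → ℕ → ℝ)
    (hp : ∀ h h', p h h' = ∫ u in (0:ℝ)..1,
      ((if u < β1 then lam1 else ν1) ^ h *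
        (1 - (if u < β1 then lam1 else ν1)) ^ (1 - h)) *
      ((if u < β2 then lam2 else ν2) ^ h' *
        (1 - (if u < β2 then lam2 else ν2)) ^ (1 - h')))
    (pr pc : ℕ → ℝ)
    (hpr : ∀ h, pr h = p h 0 + p h 1)
    (hpc : ∀ h', pc h' = p 0 h' + p 1 h')
    (V : ℝ)
    (hV : V = Real.sqrt (∑ h ∈ Finset.range 2, ∑ h' ∈ Finset.range 2,
      (p h h' - pr h * pc h') ^ 2 / (pr h * pc h'))) :
    V = ε1 * ε2 * Real.sqrt (β1 * (1 - β2) / (β2 * (1 - β1))) :=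
  cramers_V_formula_general α1 ε1 δ1 α2 ε2 δ2 β1 β2 lam1 ν1 lam2 ν2 hε1 hε2 hδ1 hδ2 hβ1 hβ2 hlam1
    hν1 hlam2 hν2 hβ1m hβ2m hord p hp pr pc hpr hpc V hV
end

section
/- Sign of dependence determines δ: consider two variables j₁ and j₂ of the same block of the one-factor binary model with δ_{j₁} = 1, α_{j₁}, α_{j₂} ∈ (0,1) and ε_{j₁}, ε_{j₂} ∈ (0,1), and let p₁₁ := ∫₀¹ p_{j₁}(u) p_{j₂}(u) du. Then p₁₁ > α_{j₁}α_{j₂} if δ_{j₂} = 1, and p₁₁ < α_{j₁}α_{j₂} if δ_{j₂} = 0. -/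
/-!
Each `p_j` is a threshold function of `u`, of mean `β_j λ_j + (1 - β_j) ν_j = α_j` and jump
`λ_j - ν_j = ε_j (2δ_j - 1)`. Writing a threshold function as a constant plus a multiple of
`1[u < β]`, and using `1[u < a] 1[u < b] = 1[u < min a b]`, the integral of a product of two of
them is the product of the means plus the product of the jumps times `min β₁ β₂ - β₁ β₂ > 0`.
So `p₁₁ - α₁ α₂ = (2δ₂ - 1) ε₁ ε₂ (min β₁ β₂ - β₁ β₂)` has the sign of `2δ₂ - 1`.
-/

open MeasureTheory Set

lemma integral_indicator_Iio_one {c : ℝ} (hc : c ∈ Icc (0:ℝ) 1) :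
    ∫ u in (0:ℝ)..1, (Iio c).indicator (1 : ℝ → ℝ) u = c := by
  have hset : Iio c ∩ Ioc 0 1 = Ioo 0 c := by
    ext u
    simp only [mem_inter_iff, mem_Iio, mem_Ioc, mem_Ioo]
    constructor
    · rintro ⟨huc, hu0, -⟩; exact ⟨hu0, huc⟩
    · rintro ⟨hu0, huc⟩; exact ⟨huc, hu0, by linarith [hc.2]⟩
  rw [intervalIntegral.integral_of_le zero_le_one, integral_indicator_one measurableSet_Iio,
    measureReal_restrict_apply measurableSet_Iio, hset, Real.volume_real_Ioo_of_le hc.1, sub_zero]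

lemma ite_lt_mul_ite_lt_eq (a b x y z w u : ℝ) :
    (if u < a then x else y) * (if u < b then z else w) =
      y * w + (x - y) * w * (Iio a).indicator 1 u + y * (z - w) * (Iio b).indicator 1 u +
        (x - y) * (z - w) * (Iio (min a b)).indicator 1 u := by
  by_cases hua : u < a <;> by_cases hub : u < b <;>
    simp only [indicator, mem_Iio, lt_min_iff, Pi.one_apply, hua, hub, if_true, if_false,
      and_true, and_false] <;> ring

lemma integral_ite_lt_mul_ite_lt_s9 {a b : ℝ} (ha : a ∈ Icc (0:ℝ) 1) (hb : b ∈ Icc (0:ℝ) 1)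
    (x y z w : ℝ) :
    ∫ u in (0:ℝ)..1, (if u < a then x else y) * (if u < b then z else w) =
      (a * x + (1 - a) * y) * (b * z + (1 - b) * w) + (x - y) * (z - w) * (min a b - a * b) := by
  have hab : min a b ∈ Icc (0:ℝ) 1 := ⟨le_min ha.1 hb.1, (min_le_left a b).trans ha.2⟩
  have hint (k c : ℝ) : IntervalIntegrable (fun u ↦ k * (Iio c).indicator 1 u) volume 0 1 :=
    (intervalIntegrable_iff.2 <| (intervalIntegrable_iff.1
      (intervalIntegrable_const (c := (1:ℝ)))).indicator measurableSet_Iio).const_mul k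
  simp only [ite_lt_mul_ite_lt_eq]
  rw [intervalIntegral.integral_add ((intervalIntegrable_const.add (hint _ _)).add (hint _ _))
      (hint _ _),
    intervalIntegral.integral_add (intervalIntegrable_const.add (hint _ _)) (hint _ _),
    intervalIntegral.integral_add intervalIntegrable_const (hint _ _),
    intervalIntegral.integral_const, intervalIntegral.integral_const_mul,
    intervalIntegral.integral_const_mul, intervalIntegral.integral_const_mul,
    integral_indicator_Iio_one ha, integral_indicator_Iio_one hb, integral_indicator_Iio_one hab,
    sub_zero, one_smul]
  ring

lemma mul_lt_min_of_mem_Ioo {a b : ℝ} (ha : a ∈ Ioo (0:ℝ) 1) (hb : b ∈ Ioo (0:ℝ) 1) :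
    a * b < min a b :=
  lt_min (mul_lt_of_lt_one_right ha.1 hb.2) (mul_lt_of_lt_one_left hb.1 ha.2)

section OneFactorModel

variable {α ε δ β : ℝ}

lemma threshold_mem_Ioo (hα : α ∈ Ioo (0:ℝ) 1) (hβ : β = if δ = 1 then α else 1 - α) :
    β ∈ Ioo (0:ℝ) 1 := by
  subst hβ
  split_ifs
  · exact hα
  · exact ⟨by linarith [hα.2], by linarith [hα.1]⟩

lemma threshold_mul_add_mul_eq (hδ : δ = 0 ∨ δ = 1) (hβ : β = if δ = 1 then α else 1 - α) :
    β * ((1 - ε) * α + ε * δ) + (1 - β) * ((1 - ε) * α + ε * (1 - δ)) = α := by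
  rcases hδ with rfl | rfl <;> simp only [hβ] <;> norm_num <;> ring

end OneFactorModel

theorem sign_of_dependence_general
    (α1 ε1 δ1 α2 ε2 δ2 β1 β2 lam1 ν1 lam2 ν2 p11 : ℝ)
    (hα1 : α1 ∈ Set.Ioo (0:ℝ) 1) (hα2 : α2 ∈ Set.Ioo (0:ℝ) 1)
    (hε1 : ε1 ∈ Set.Ioo (0:ℝ) 1) (hε2 : ε2 ∈ Set.Ioo (0:ℝ) 1)
    (hδ1 : δ1 = 1)
    (hβ1 : β1 = if δ1 = 1 then α1 else 1 - α1)
    (hβ2 : β2 = if δ2 = 1 then α2 else 1 - α2)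
    (hlam1 : lam1 = (1 - ε1) * α1 + ε1 * δ1) (hν1 : ν1 = (1 - ε1) * α1 + ε1 * (1 - δ1))
    (hlam2 : lam2 = (1 - ε2) * α2 + ε2 * δ2) (hν2 : ν2 = (1 - ε2) * α2 + ε2 * (1 - δ2))
    (hp11 : p11 = ∫ u in (0:ℝ)..1,
      (if u < β1 then lam1 else ν1) * (if u < β2 then lam2 else ν2)) :
    (δ2 = 1 → α1 * α2 < p11) ∧ (δ2 = 0 → p11 < α1 * α2) := by
  have hβ1_mem := threshold_mem_Ioo hα1 hβ1
  have hβ2_mem := threshold_mem_Ioo hα2 hβ2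
  have hcov : 0 < ε1 * ε2 * (min β1 β2 - β1 * β2) :=
    mul_pos (mul_pos hε1.1 hε2.1) (sub_pos.2 (mul_lt_min_of_mem_Ioo hβ1_mem hβ2_mem))
  have hp11_eq (hδ2 : δ2 = 0 ∨ δ2 = 1) :
      p11 = α1 * α2 + (2 * δ2 - 1) * (ε1 * ε2 * (min β1 β2 - β1 * β2)) := by
    rw [hp11,
      integral_ite_lt_mul_ite_lt_s9 (Ioo_subset_Icc_self hβ1_mem) (Ioo_subset_Icc_self hβ2_mem),
      hlam1, hν1, hlam2, hν2, threshold_mul_add_mul_eq (Or.inr hδ1) hβ1,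
      threshold_mul_add_mul_eq hδ2 hβ2, hδ1]
    ring
  constructor
  · intro hδ2
    rw [hp11_eq (Or.inr hδ2), hδ2]
    linarith
  · intro hδ2
    rw [hp11_eq (Or.inl hδ2), hδ2]
    linarith

/-- **Sign of dependence determines `δ`.**
For two variables of the same block of the one-factor binary model with `δ₁ = 1`,
`α₁, α₂ ∈ (0,1)`, `ε₁, ε₂ ∈ (0,1)` and `p₁₁ = ∫₀¹ p₁(u) p₂(u) du`, one has
`p₁₁ > α₁α₂` if `δ₂ = 1`, and `p₁₁ < α₁α₂` if `δ₂ = 0`. -/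
theorem sign_of_dependence
    (α1 ε1 δ1 α2 ε2 δ2 β1 β2 lam1 ν1 lam2 ν2 p11 : ℝ)
    (hα1 : α1 ∈ Set.Ioo (0:ℝ) 1) (hα2 : α2 ∈ Set.Ioo (0:ℝ) 1)
    (hε1 : ε1 ∈ Set.Ioo (0:ℝ) 1) (hε2 : ε2 ∈ Set.Ioo (0:ℝ) 1)
    (hδ1 : δ1 = 1) (hδ2 : δ2 = 0 ∨ δ2 = 1)
    (hβ1 : β1 = if δ1 = 1 then α1 else 1 - α1)
    (hβ2 : β2 = if δ2 = 1 then α2 else 1 - α2)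
    (hlam1 : lam1 = (1 - ε1) * α1 + ε1 * δ1) (hν1 : ν1 = (1 - ε1) * α1 + ε1 * (1 - δ1))
    (hlam2 : lam2 = (1 - ε2) * α2 + ε2 * δ2) (hν2 : ν2 = (1 - ε2) * α2 + ε2 * (1 - δ2))
    (hp11 : p11 = ∫ u in (0:ℝ)..1,
      (if u < β1 then lam1 else ν1) * (if u < β2 then lam2 else ν2)) :
    (δ2 = 1 → α1 * α2 < p11) ∧ (δ2 = 0 → p11 < α1 * α2) :=
  sign_of_dependence_general α1 ε1 δ1 α2 ε2 δ2 β1 β2 lam1 ν1 lam2 ν2 p11 hα1 hα2 hε1 hε2 hδ1 hβ1 hβ2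
    hlam1 hν1 hlam2 hν2 hp11
end
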